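/- arXiv:1307.6752 — 2 statements merged into one kernel-verified Lean document; each statement's English description precedes it below -/
import Mathlib

section
/- For 0 < q < 1, the q-exponential E_q(z) = ∑_{n=0}^∞ q^(n(n-1)/2) z^n / [n]_q! satisfies E_q(-z) = ∏_{i=0}^∞ (1 - (1-q) q^i z), where [n]_q! = ∏_{k=1}^n (1-q^k)/(1-q). -/
/-- `[n]_q!` : the q-factorial, `∏_{k=1}^n (1-q^k)/(1-q)`. -/
noncomputable def qFactorial (q : ℂ) (n : ℕ) : ℂ :=
  ∏ k ∈ Finset.range n, (1 - q ^ (k + 1)) / (1 - q)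

/-- `E_q(z) = ∑ q^(n(n-1)/2) z^n / [n]_q!`. -/
noncomputable def qExpE (q : ℂ) (z : ℂ) : ℂ :=
  ∑' n : ℕ, q ^ (n * (n - 1) / 2) * z ^ n / qFactorial q n

/-!
Comparing coefficients gives the q-difference equation `E_q(z) = (1 + (1 - q) z) E_q(q z)`;
iterating it, `E_q(z) = ∏_{i<N} (1 + (1 - q) q^i z) · E_q(q^N z)`. As `N → ∞`, `q^N z → 0`, and
`E_q` is continuous at `0` with `E_q(0) = 1` by dominated convergence, so `E_q(z)` is the infinite
product.
-/

open Filter Finset Topology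

namespace QExp

variable {q : ℂ}

noncomputable def qExpCoeff (q : ℂ) (n : ℕ) : ℂ :=
  q ^ (n * (n - 1) / 2) / qFactorial q n

lemma qExpE_eq_tsum (q z : ℂ) : qExpE q z = ∑' n, qExpCoeff q n * z ^ n := by
  simp only [qExpE, qExpCoeff, div_mul_eq_mul_div]

lemma qExpCoeff_succ (q : ℂ) (n : ℕ) :
    qExpCoeff q (n + 1) = qExpCoeff q n * ((1 - q) * q ^ n / (1 - q ^ (n + 1))) := by
  rw [qExpCoeff, qExpCoeff, qFactorial, prod_range_succ, ← qFactorial, Nat.triangle_succ,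
    pow_add]
  simp only [div_eq_mul_inv, mul_inv, inv_inv]
  ring

lemma summable_norm_qExpCoeff_mul_pow (hq : ‖q‖ < 1) (z : ℂ) :
    Summable fun n => ‖qExpCoeff q n * z ^ n‖ := by
  have hpow : Tendsto (fun n : ℕ => q ^ n) atTop (𝓝 0) :=
    tendsto_pow_atTop_nhds_zero_of_norm_lt_one hq
  have hratio : Tendsto (fun n : ℕ => (1 - q) * q ^ n / (1 - q ^ (n + 1)) * z) atTop (𝓝 0) := by
    simpa using ((hpow.const_mul (1 - q)).div
      (tendsto_const_nhds.sub (hpow.comp (tendsto_add_atTop_nat 1))) (by simp)).mul_const z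
  refine summable_of_ratio_norm_eventually_le (r := 1 / 2) (by norm_num) ?_
  filter_upwards [hratio.norm.eventually_le_const (by norm_num : ‖(0 : ℂ)‖ < 1 / 2)] with n hn
  calc ‖‖qExpCoeff q (n + 1) * z ^ (n + 1)‖‖
      = ‖(1 - q) * q ^ n / (1 - q ^ (n + 1)) * z‖ * ‖qExpCoeff q n * z ^ n‖ := by
        rw [norm_norm, qExpCoeff_succ, pow_succ, ← norm_mul]
        ring_nf
    _ ≤ 1 / 2 * ‖‖qExpCoeff q n * z ^ n‖‖ := by
        rw [norm_norm]
        exact mul_le_mul_of_nonneg_right hn (norm_nonneg _)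

lemma qExpE_eq_mul_qExpE_mul (hq : ‖q‖ < 1) (z : ℂ) :
    qExpE q z = (1 + (1 - q) * z) * qExpE q (q * z) := by
  have hsum (w : ℂ) : Summable fun n => qExpCoeff q n * w ^ n :=
    (summable_norm_qExpCoeff_mul_pow hq w).of_norm
  have hdenom (n : ℕ) : 1 - q ^ (n + 1) ≠ 0 := by
    refine sub_ne_zero.2 fun h => ?_
    have := pow_lt_one₀ (norm_nonneg q) hq n.succ_ne_zero
    rw [← norm_pow, ← h, norm_one] at this
    exact this.false
  -- the `n = 0` terms cancel, and `1 - q ^ (n + 1)` cancels the denominator of `qExpCoeff_succ`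
  have hdiff : qExpE q z - qExpE q (q * z) = (1 - q) * z * qExpE q (q * z) := by
    rw [qExpE_eq_tsum, qExpE_eq_tsum, ← (hsum z).tsum_sub (hsum (q * z)),
      (hsum z).sub (hsum (q * z)) |>.tsum_eq_zero_add, ← tsum_mul_left]
    simp only [pow_zero, sub_self, zero_add]
    refine tsum_congr fun n => ?_
    rw [qExpCoeff_succ]
    field_simp [hdenom n]
    ring
  linear_combination hdiff

lemma qExpE_eq_prod_mul_qExpE (hq : ‖q‖ < 1) (z : ℂ) (N : ℕ) :
    qExpE q z = (∏ i ∈ range N, (1 + (1 - q) * q ^ i * z)) * qExpE q (q ^ N * z) := by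
  induction N with
  | zero => simp
  | succ N ih =>
    rw [ih, qExpE_eq_mul_qExpE_mul hq (q ^ N * z), prod_range_succ]
    ring_nf

lemma tendsto_qExpE_nhds_zero (hq : ‖q‖ < 1) : Tendsto (qExpE q) (𝓝 0) (𝓝 1) := by
  have hlim : Tendsto (fun w => ∑' n, qExpCoeff q n * w ^ n) (𝓝 0)
      (𝓝 (∑' n, qExpCoeff q n * 0 ^ n)) := by
    refine tendsto_tsum_of_dominated_convergence (bound := fun n => ‖qExpCoeff q n * 1 ^ n‖)
      (summable_norm_qExpCoeff_mul_pow hq 1)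
      (fun n => ((continuous_pow n).tendsto 0).const_mul _) ?_
    filter_upwards [Metric.closedBall_mem_nhds (0 : ℂ) one_pos] with w hw n
    rw [mem_closedBall_zero_iff] at hw
    simp only [norm_mul, norm_pow, one_pow, mul_one]
    exact mul_le_of_le_one_right (norm_nonneg _) (pow_le_one₀ (norm_nonneg w) hw)
  have hzero : ∑' n, qExpCoeff q n * 0 ^ n = 1 := by
    rw [tsum_eq_single 0 fun n hn => by simp [hn]]
    simp [qExpCoeff, qFactorial]
  simpa only [← qExpE_eq_tsum, hzero] using hlim

lemma multipliable_one_add_geometric_mul (hq : ‖q‖ < 1) (c : ℂ) :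
    Multipliable fun i : ℕ => 1 + c * q ^ i := by
  refine multipliable_one_add_of_summable ?_
  simpa only [norm_mul, norm_pow] using
    (summable_geometric_of_lt_one (norm_nonneg q) hq).mul_left ‖c‖

theorem qExpE_eq_tprod_one_add (hq : ‖q‖ < 1) (z : ℂ) :
    qExpE q z = ∏' i : ℕ, (1 + (1 - q) * q ^ i * z) := by
  have hmult : Multipliable fun i : ℕ => 1 + (1 - q) * q ^ i * z := by
    simpa only [mul_right_comm] using multipliable_one_add_geometric_mul hq ((1 - q) * z)
  have htail : Tendsto (fun N : ℕ => qExpE q (q ^ N * z)) atTop (𝓝 1) :=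
    (tendsto_qExpE_nhds_zero hq).comp <| by
      simpa using (tendsto_pow_atTop_nhds_zero_of_norm_lt_one hq).mul_const z
  have hprod := hmult.hasProd.tendsto_prod_nat.mul htail
  rw [mul_one] at hprod
  exact tendsto_nhds_unique (tendsto_const_nhds.congr (qExpE_eq_prod_mul_qExpE hq z)) hprod

end QExp

theorem qExpE_eq_tprod (q : ℝ) (hq0 : 0 < q) (hq1 : q < 1) (z : ℂ) :
    qExpE (q : ℂ) (-z) = ∏' i : ℕ, (1 - (1 - (q : ℂ)) * (q : ℂ) ^ i * z) := by
  have hq : ‖(q : ℂ)‖ < 1 := by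
    rwa [Complex.norm_real, Real.norm_of_nonneg hq0.le]
  rw [QExp.qExpE_eq_tprod_one_add hq]
  exact tprod_congr fun i => by ring
end

section
/- The Gauss q-binomial theorem: for elements x, y of a commutative ring and n ∈ ℕ, ∏_{j=0}^{n-1} (x + q^j y) = ∑_{k=0}^n (n choose k)_q q^(k(k-1)/2) x^(n-k) y^k, where (n choose k)_q is the Gaussian binomial coefficient. -/
/-- The Gaussian (q-)binomial coefficient, defined via the q-Pascal rule
`[n+1, k+1]_q = [n, k]_q + q^(k+1) [n, k+1]_q`. -/
def gaussBinom {R : Type*} [CommRing R] (q : R) : ℕ → ℕ → R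
  | _, 0 => 1
  | 0, _ + 1 => 0
  | n + 1, k + 1 => gaussBinom q n k + q ^ (k + 1) * gaussBinom q n (k + 1)

lemma gaussBinom_eq_zero {R : Type*} [CommRing R] (q : R) :
    ∀ n k : ℕ, n < k → gaussBinom q n k = 0
  | 0, _ + 1, _ => rfl
  | n + 1, k + 1, h => by
    rw [gaussBinom, gaussBinom_eq_zero q n k (by omega),
      gaussBinom_eq_zero q n (k + 1) (by omega)]
    ring

lemma tri_succ (k : ℕ) : (k + 1) * ((k + 1) - 1) / 2 = k * (k - 1) / 2 + k := by
  rw [← Nat.choose_two_right, ← Nat.choose_two_right, Nat.choose_succ_succ,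
    Nat.choose_one_right, add_comm]

theorem gauss_q_binomial {R : Type*} [CommRing R] (q x y : R) (n : ℕ) :
    ∏ j ∈ Finset.range n, (x + q ^ j * y) =
      ∑ k ∈ Finset.range (n + 1),
        gaussBinom q n k * q ^ (k * (k - 1) / 2) * x ^ (n - k) * y ^ k := by
  induction n generalizing y with
  | zero => simp [gaussBinom]
  | succ n ih =>
    rw [Finset.prod_range_succ']
    have h1 : ∀ j : ℕ, x + q ^ (j + 1) * y = x + q ^ j * (q * y) := by
      intro j; rw [pow_succ, mul_assoc]
    simp only [h1]
    rw [ih (q * y)]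
    rw [Finset.sum_range_succ' (fun k => gaussBinom q (n + 1) k *
      q ^ (k * (k - 1) / 2) * x ^ (n + 1 - k) * y ^ k) (n + 1)]
    have hy : x + q ^ 0 * y = x + y := by ring
    rw [hy, mul_add, Finset.sum_mul, Finset.sum_mul]
    rw [Finset.sum_range_succ' (fun k => gaussBinom q n k *
      q ^ (k * (k - 1) / 2) * x ^ (n - k) * (q * y) ^ k * x) n]
    have hext : (∑ k ∈ Finset.range n, gaussBinom q n (k + 1) *
        q ^ ((k + 1) * ((k + 1) - 1) / 2) * x ^ (n - (k + 1)) * (q * y) ^ (k + 1) * x)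
        = ∑ k ∈ Finset.range (n + 1), gaussBinom q n (k + 1) *
        q ^ ((k + 1) * ((k + 1) - 1) / 2) * x ^ (n - (k + 1)) * (q * y) ^ (k + 1) * x := by
      rw [Finset.sum_range_succ, gaussBinom_eq_zero q n (n + 1) (by omega)]
      ring
    rw [hext]
    rw [add_right_comm, ← Finset.sum_add_distrib]
    congr 1
    · refine Finset.sum_congr rfl fun k hk => ?_
      have hk' : k ≤ n := by simpa [Nat.lt_succ_iff] using hk
      show _ = gaussBinom q (n + 1) (k + 1) * _ * _ * _
      rw [show gaussBinom q (n + 1) (k + 1) =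
        gaussBinom q n k + q ^ (k + 1) * gaussBinom q n (k + 1) from rfl]
      rw [tri_succ, Nat.succ_sub_succ]
      rcases Nat.lt_or_ge k n with hlt | hge
      · have hx : n - k = n - (k + 1) + 1 := by omega
        rw [hx]
        ring
      · rw [gaussBinom_eq_zero q n (k + 1) (by omega)]
        ring
    · simp [gaussBinom, pow_succ]
end
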